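/- A monad T on Type u is α-commutative for every n and every bijection α : Fin n → Fin n if and only if T is commutative. -/
import Mathlib


universe u

/-- The canonical "double strength" `ψ` of a monad: first `p`, then `q`. -/
def monadPsi {T : Type u → Type u} [Monad T] {X Y : Type u} (p : T X) (q : T Y) :
    T (X × Y) := do
  let x ← p
  let y ← q
  pure (x, y)

/-- The reversed double strength `ψ'` of a monad: first `q`, then `p`. -/
def monadPsi' {T : Type u → Type u} [Monad T] {X Y : Type u} (p : T X) (q : T Y) :
    T (X × Y) := do
  let y ← q
  let x ← p
  pure (x, y)

/-- The `n`-ary sequencing map `ψ⁽ⁿ⁾ : (Fin n → T X) → T (Fin n → X)`. -/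
def monadPsiN {T : Type u → Type u} [Monad T] {X : Type u} :
    (n : ℕ) → (Fin n → T X) → T (Fin n → X)
  | 0, _ => pure Fin.elim0
  | n + 1, p => do
    let x ← p 0
    let v ← monadPsiN n (p ∘ Fin.succ)
    pure (Fin.cons x v)

/-- `T` is `α`-commutative for a function `α : Fin m → Fin n`. -/
def AlphaCommutative (T : Type u → Type u) [Monad T] {m n : ℕ} (α : Fin m → Fin n) : Prop :=
  ∀ (X : Type u) (p : Fin n → T X),
    (fun v => v ∘ α) <$> monadPsiN n p = monadPsiN m (p ∘ α)

/-- `T` is commutative. -/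
def MonadIsCommutative (T : Type u → Type u) [Monad T] : Prop :=
  ∀ (X Y : Type u) (p : T X) (q : T Y), monadPsi p q = monadPsi' p q

/-- `T` is affine. -/
def MonadIsAffine (T : Type u → Type u) [Monad T] : Prop :=
  ∀ (X : Type u) (p : T X),
    (fun _ => PUnit.unit.{u + 1}) <$> p = (pure PUnit.unit.{u + 1} : T PUnit.{u + 1})

/-- `T` is relevant. -/
def MonadIsRelevant (T : Type u → Type u) [Monad T] : Prop :=
  ∀ (X : Type u) (p : T X), monadPsi p p = (fun x : X => (x, x)) <$> p

section aux
variable {T : Type u → Type u} [Monad T] [LawfulMonad T]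

theorem comm_bind (hT : MonadIsCommutative T) {X Y Z : Type u}
    (p : T X) (q : T Y) (k : X → Y → T Z) :
    (p >>= fun x => q >>= fun y => k x y) = q >>= fun y => p >>= fun x => k x y := by
  have h := hT X Y p q
  unfold monadPsi monadPsi' at h
  have h1 : (p >>= fun x => q >>= fun y => k x y)
      = (p >>= fun x => q >>= fun y => pure (x, y)) >>= fun xy => k xy.1 xy.2 := by
    simp [bind_assoc]
  have h2 : (q >>= fun y => p >>= fun x => k x y)
      = (q >>= fun y => p >>= fun x => pure (x, y)) >>= fun xy => k xy.1 xy.2 := by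
    simp [bind_assoc]
  rw [h1, h2, h]

theorem insertNth_succ_cons {X : Type u} {n : ℕ} (j : Fin (n + 1)) (y x : X) (w : Fin n → X) :
    Fin.insertNth (α := fun _ => X) j.succ y (Fin.cons x w)
      = Fin.cons x (Fin.insertNth j y w) := by
  funext k
  induction k using Fin.cases with
  | zero =>
    have h0 : (0 : Fin (n + 2)) = j.succ.succAbove 0 := by simp
    rw [h0, Fin.insertNth_apply_succAbove]
    simp
  | succ l =>
    induction l using Fin.succAboveCases (i := j) with
    | x => simp [Fin.insertNth_apply_same]
    | p m =>
      have h1 : (j.succAbove m).succ = j.succ.succAbove m.succ := by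
        rw [Fin.succ_succAbove_succ]
      rw [h1, Fin.insertNth_apply_succAbove]
      simp [Fin.insertNth_apply_succAbove]

theorem psiN_pull (hT : MonadIsCommutative T) :
    ∀ (n : ℕ) (X : Type u) (p : Fin (n + 1) → T X) (i : Fin (n + 1)),
    monadPsiN (n + 1) p
      = p i >>= fun x => monadPsiN n (p ∘ i.succAbove) >>= fun v => pure (i.insertNth x v) := by
  intro n
  induction n with
  | zero =>
    intro X p i
    fin_cases i
    simp [monadPsiN]
  | succ n ih =>
    intro X p i
    induction i using Fin.cases with
    | zero =>
      simp [monadPsiN]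
    | succ j =>
      show monadPsiN (n + 2) p = _
      have e1 : monadPsiN (n + 2) p
          = p 0 >>= fun x => monadPsiN (n + 1) (p ∘ Fin.succ) >>= fun v => pure (Fin.cons x v) := rfl
      rw [e1, ih X (p ∘ Fin.succ) j]
      have e2 : (p ∘ Fin.succ ∘ j.succAbove) = p ∘ j.succ.succAbove ∘ Fin.succ := by
        funext k; simp [Function.comp, Fin.succ_succAbove_succ]
      have e3 : monadPsiN (n + 1) (p ∘ j.succ.succAbove)
          = p 0 >>= fun x => monadPsiN n (p ∘ Fin.succ ∘ j.succAbove) >>= fun w => pure (Fin.cons x w) := by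
        show _ = p 0 >>= _
        have : (p ∘ j.succ.succAbove) 0 = p 0 := by simp
        rw [show monadPsiN (n+1) (p ∘ j.succ.succAbove)
            = (p ∘ j.succ.succAbove) 0 >>= fun x => monadPsiN n ((p ∘ j.succ.succAbove) ∘ Fin.succ) >>= fun w => pure (Fin.cons x w) from rfl]
        rw [this]
        congr 1
        funext x
        congr 2
        funext k
        simp [Function.comp, Fin.succ_succAbove_succ]
      rw [e3]
      simp only [bind_assoc, pure_bind, Function.comp_apply]
      rw [comm_bind hT (p 0) (p j.succ)]
      congr 1
      funext y
      congr 1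
      funext x
      congr 1
      funext w
      congr 1
      rw [insertNth_succ_cons]

end aux

section aux2
variable {T : Type u → Type u} [Monad T] [LawfulMonad T]

theorem psiN_perm (hT : MonadIsCommutative T) :
    ∀ (n : ℕ) (α : Fin n → Fin n), Function.Bijective α →
      ∀ (X : Type u) (p : Fin n → T X),
      (fun v => v ∘ α) <$> monadPsiN n p = monadPsiN n (p ∘ α) := by
  intro n
  induction n with
  | zero =>
    intro α hα X p
    show (fun v => v ∘ α) <$> (pure Fin.elim0 : T (Fin 0 → X)) = pure Fin.elim0
    rw [map_pure]
    congr 1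
  | succ n ih =>
    intro α hα X p
    set i := α 0 with hi
    have hne : ∀ j : Fin n, α j.succ ≠ i := fun j h =>
      (Fin.succ_ne_zero j) (hα.1 h)
    set β : Fin n → Fin n := fun j => (finSuccAboveEquiv i).symm ⟨α j.succ, hne j⟩ with hβ
    have hsa : ∀ j, i.succAbove (β j) = α j.succ := by
      intro j
      have h1 : (finSuccAboveEquiv i) (β j) = ⟨α j.succ, hne j⟩ :=
        (finSuccAboveEquiv i).apply_symm_apply _
      have h2 := congrArg Subtype.val h1
      rw [finSuccAboveEquiv_apply] at h2
      exact h2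
    have hβinj : Function.Injective β := fun a b hab => by
      have : α a.succ = α b.succ := by rw [← hsa a, ← hsa b, hab]
      exact Fin.succ_injective n (hα.1 this)
    have hβbij : Function.Bijective β := Finite.injective_iff_bijective.mp hβinj
    rw [psiN_pull hT n X p i]
    have key : monadPsiN (n + 1) (p ∘ α)
        = p i >>= fun x => monadPsiN n ((p ∘ i.succAbove) ∘ β) >>= fun v =>
            pure (Fin.cons x v) := by
      rw [show monadPsiN (n + 1) (p ∘ α)
          = (p ∘ α) 0 >>= fun x => monadPsiN n ((p ∘ α) ∘ Fin.succ) >>= fun v =>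
              pure (Fin.cons x v) from rfl]
      have h3 : (p ∘ α) ∘ Fin.succ = (p ∘ i.succAbove) ∘ β := by
        funext j; simp [Function.comp, hsa j]
      rw [h3]
      rfl
    rw [key, ← ih β hβbij X (p ∘ i.succAbove)]
    simp only [map_eq_pure_bind, bind_assoc, pure_bind]
    congr 1; funext x; congr 1; funext v; congr 1
    funext k
    induction k using Fin.cases with
    | zero => simp [Function.comp, ← hi, Fin.insertNth_apply_same]
    | succ j => simp [Function.comp, ← hsa j, Fin.insertNth_apply_succAbove]

end aux2

/-- A monad `T` is `α`-commutative for every `n` and every bijection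
`α : Fin n → Fin n` iff `T` is commutative. -/
theorem alphaCommutative_bijective_iff_commutative
    {T : Type u → Type u} [Monad T] [LawfulMonad T] :
    (∀ (n : ℕ) (α : Fin n → Fin n), Function.Bijective α → AlphaCommutative T α) ↔
      MonadIsCommutative T := by
  constructor
  · intro h X Y p q
    have hbij : Function.Bijective (![1, 0] : Fin 2 → Fin 2) := by decide
    have hE := h 2 ![1, 0] hbij (X ⊕ Y) ![Sum.inl <$> p, Sum.inr <$> q]
    have hE2 := congrArg
      (fun m => m >>= fun w : Fin 2 → X ⊕ Y =>
        match w 0, w 1 with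
        | Sum.inr b, Sum.inl a => (pure (a, b) : T (X × Y))
        | _, _ => monadPsi p q) hE
    simp only [monadPsiN, map_eq_pure_bind, bind_assoc, pure_bind,
      Matrix.cons_val_zero, Matrix.cons_val_one, Matrix.head_cons,
      Function.comp_apply, Fin.cons_zero, Fin.cons_succ] at hE2
    unfold monadPsi monadPsi'
    convert hE2 using 1 <;> simp [bind_assoc]
  · intro hT n α hα X p
    exact psiN_perm hT n α hα X p
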